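/- arXiv:1509.00383 — 2 statements merged into one kernel-verified Lean document; each statement's English description precedes it below -/
import Mathlib

section
/- For all integers v, s ≥ 0 and all integers i, j such that p² ∤ j, p² ∤ i, and (−i/p) = (j/p), one has p^s ∣ B(p^{2v}·j, p^{2v+2s}·i). -/
/-- Theorem 1.2 (2): `p^s ∣ B(p^{2v}·j, p^{2v+2s}·i)` whenever `p² ∤ j`,
`p² ∤ i` and `(−i/p) = (j/p)`, for the Folsom–Ono grid. -/
theorem stmt_18 {p : ℕ} [Fact p.Prime] (hp : 5 ≤ p)
    (B : ℤ → ℤ → ℤ)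
    (hrel1 : ∀ D d : ℤ,
      B D ((p : ℤ) ^ 2 * d) + legendreSym p 12 * legendreSym p (-d) * B D d
        + (p : ℤ) * (if (p : ℤ) ^ 2 ∣ d then B D (d / (p : ℤ) ^ 2) else 0)
      = (if (p : ℤ) ^ 2 ∣ D then B (D / (p : ℤ) ^ 2) d else 0)
        + legendreSym p 12 * legendreSym p D * B D d
        + (p : ℤ) * B ((p : ℤ) ^ 2 * D) d)
    (hrel2 : ∀ D d : ℤ,
      (p : ℤ) * B ((p : ℤ) ^ 2 * D) d + legendreSym p 12 * legendreSym p D * B D d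
        + (if (p : ℤ) ^ 2 ∣ D then B (D / (p : ℤ) ^ 2) d else 0)
      = (p : ℤ) * (if (p : ℤ) ^ 2 ∣ d then B D (d / (p : ℤ) ^ 2) else 0)
        + legendreSym p 12 * legendreSym p (-d) * B D d + B D ((p : ℤ) ^ 2 * d))
    (v s : ℕ) (i j : ℤ) (hjp : ¬ (p : ℤ) ^ 2 ∣ j) (hip : ¬ (p : ℤ) ^ 2 ∣ i)
    (hleg : legendreSym p (-i) = legendreSym p j) :
    ((p : ℤ) ^ s) ∣ B ((p : ℤ) ^ (2 * v) * j) ((p : ℤ) ^ (2 * v + 2 * s) * i) := by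
  have hpp : p.Prime := Fact.out
  have hq : (p : ℤ) ≠ 0 := by exact_mod_cast hpp.ne_zero
  have h2ne : ((p : ℤ)) ^ 2 ≠ 0 := pow_ne_zero _ hq
  have hp0 : ∀ y : ℤ, legendreSym p ((p : ℤ) ^ 2 * y) = 0 := by
    intro y
    rw [legendreSym.eq_zero_iff]
    push_cast
    simp
  have legj : ∀ w : ℕ, legendreSym p ((p : ℤ) ^ (2 * (w + 1)) * j) = 0 := by
    intro w
    rw [show (p : ℤ) ^ (2 * (w + 1)) * j = (p : ℤ) ^ 2 * ((p : ℤ) ^ (2 * w) * j) by ring]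
    exact hp0 _
  have legni : ∀ k : ℕ, legendreSym p (-((p : ℤ) ^ (2 * (k + 1)) * i)) = 0 := by
    intro k
    rw [show -((p : ℤ) ^ (2 * (k + 1)) * i) = (p : ℤ) ^ 2 * (-((p : ℤ) ^ (2 * k) * i)) by ring]
    exact hp0 _
  have hdvdj : ∀ w : ℕ, ((p : ℤ)) ^ 2 ∣ (p : ℤ) ^ (2 * (w + 1)) * j :=
    fun w => ⟨(p : ℤ) ^ (2 * w) * j, by ring⟩
  have hdvdi : ∀ k : ℕ, ((p : ℤ)) ^ 2 ∣ (p : ℤ) ^ (2 * (k + 1)) * i :=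
    fun k => ⟨(p : ℤ) ^ (2 * k) * i, by ring⟩
  have hdivj : ∀ w : ℕ, ((p : ℤ) ^ (2 * (w + 1)) * j) / (p : ℤ) ^ 2 = (p : ℤ) ^ (2 * w) * j := by
    intro w
    rw [show (p : ℤ) ^ (2 * (w + 1)) * j = (p : ℤ) ^ 2 * ((p : ℤ) ^ (2 * w) * j) by ring]
    exact Int.mul_ediv_cancel_left _ h2ne
  have hdivi : ∀ k : ℕ, ((p : ℤ) ^ (2 * (k + 1)) * i) / (p : ℤ) ^ 2 = (p : ℤ) ^ (2 * k) * i := by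
    intro k
    rw [show (p : ℤ) ^ (2 * (k + 1)) * i = (p : ℤ) ^ 2 * ((p : ℤ) ^ (2 * k) * i) by ring]
    exact Int.mul_ediv_cancel_left _ h2ne
  -- R1 : interior recursion (both indices positive)
  have R1 : ∀ w k : ℕ,
      B ((p : ℤ) ^ (2 * (w + 1)) * j) ((p : ℤ) ^ (2 * (k + 2)) * i)
        + (p : ℤ) * B ((p : ℤ) ^ (2 * (w + 1)) * j) ((p : ℤ) ^ (2 * k) * i)
      = B ((p : ℤ) ^ (2 * w) * j) ((p : ℤ) ^ (2 * (k + 1)) * i)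
        + (p : ℤ) * B ((p : ℤ) ^ (2 * (w + 2)) * j) ((p : ℤ) ^ (2 * (k + 1)) * i) := by
    intro w k
    have h := hrel1 ((p : ℤ) ^ (2 * (w + 1)) * j) ((p : ℤ) ^ (2 * (k + 1)) * i)
    rw [if_pos (hdvdj w), if_pos (hdvdi k), hdivj w, hdivi k, legj w, legni k,
      show (p : ℤ) ^ 2 * ((p : ℤ) ^ (2 * (k + 1)) * i) = (p : ℤ) ^ (2 * (k + 2)) * i by ring,
      show (p : ℤ) ^ 2 * ((p : ℤ) ^ (2 * (w + 1)) * j) = (p : ℤ) ^ (2 * (w + 2)) * j by ring] at h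
    linear_combination h
  -- R2 : boundary k = 0, w ≥ 1
  have R2 : ∀ w : ℕ,
      B ((p : ℤ) ^ (2 * (w + 1)) * j) ((p : ℤ) ^ (2 * 1) * i)
        + legendreSym p 12 * legendreSym p j * B ((p : ℤ) ^ (2 * (w + 1)) * j) i
      = B ((p : ℤ) ^ (2 * w) * j) i + (p : ℤ) * B ((p : ℤ) ^ (2 * (w + 2)) * j) i := by
    intro w
    have h := hrel1 ((p : ℤ) ^ (2 * (w + 1)) * j) i
    rw [if_pos (hdvdj w), if_neg hip, hdivj w, legj w, hleg,
      show (p : ℤ) ^ 2 * i = (p : ℤ) ^ (2 * 1) * i by ring,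
      show (p : ℤ) ^ 2 * ((p : ℤ) ^ (2 * (w + 1)) * j) = (p : ℤ) ^ (2 * (w + 2)) * j by ring] at h
    linear_combination h
  -- R3 : boundary w = 0, k ≥ 1
  have R3 : ∀ k : ℕ,
      B j ((p : ℤ) ^ (2 * (k + 2)) * i) + (p : ℤ) * B j ((p : ℤ) ^ (2 * k) * i)
      = legendreSym p 12 * legendreSym p j * B j ((p : ℤ) ^ (2 * (k + 1)) * i)
        + (p : ℤ) * B ((p : ℤ) ^ (2 * 1) * j) ((p : ℤ) ^ (2 * (k + 1)) * i) := by
    intro k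
    have h := hrel1 j ((p : ℤ) ^ (2 * (k + 1)) * i)
    rw [if_neg hjp, if_pos (hdvdi k), hdivi k, legni k,
      show (p : ℤ) ^ 2 * ((p : ℤ) ^ (2 * (k + 1)) * i) = (p : ℤ) ^ (2 * (k + 2)) * i by ring,
      show (p : ℤ) ^ 2 * j = (p : ℤ) ^ (2 * 1) * j by ring] at h
    linear_combination h
  -- the key identity : a (w, w+m) = p^m * a (w+m, w)
  have case0 : ∀ w : ℕ,
      B ((p : ℤ) ^ (2 * w) * j) ((p : ℤ) ^ (2 * (w + 0)) * i)
      = (p : ℤ) ^ 0 * B ((p : ℤ) ^ (2 * (w + 0)) * j) ((p : ℤ) ^ (2 * w) * i) := by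
    intro w; simp
  have case1 : ∀ w : ℕ,
      B ((p : ℤ) ^ (2 * w) * j) ((p : ℤ) ^ (2 * (w + 1)) * i)
      = (p : ℤ) ^ 1 * B ((p : ℤ) ^ (2 * (w + 1)) * j) ((p : ℤ) ^ (2 * w) * i) := by
    intro w
    induction w with
    | zero =>
      simp only [Nat.zero_add, Nat.mul_zero, pow_zero, one_mul]
      have h := hrel1 j i
      rw [if_neg hip, if_neg hjp, hleg,
        show (p : ℤ) ^ 2 * i = (p : ℤ) ^ (2 * 1) * i by ring,
        show (p : ℤ) ^ 2 * j = (p : ℤ) ^ (2 * 1) * j by ring] at h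
      linear_combination h
    | succ w ih =>
      rw [show w + 1 + 1 = w + 2 from by omega]
      linear_combination R1 w w + ih
  have step : ∀ m : ℕ,
      (∀ w : ℕ, B ((p : ℤ) ^ (2 * w) * j) ((p : ℤ) ^ (2 * (w + m)) * i)
        = (p : ℤ) ^ m * B ((p : ℤ) ^ (2 * (w + m)) * j) ((p : ℤ) ^ (2 * w) * i)) →
      (∀ w : ℕ, B ((p : ℤ) ^ (2 * w) * j) ((p : ℤ) ^ (2 * (w + (m + 1))) * i)
        = (p : ℤ) ^ (m + 1) * B ((p : ℤ) ^ (2 * (w + (m + 1))) * j) ((p : ℤ) ^ (2 * w) * i)) →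
      (∀ w : ℕ, B ((p : ℤ) ^ (2 * w) * j) ((p : ℤ) ^ (2 * (w + (m + 2))) * i)
        = (p : ℤ) ^ (m + 2) * B ((p : ℤ) ^ (2 * (w + (m + 2))) * j) ((p : ℤ) ^ (2 * w) * i)) := by
    intro m hm hm1 w
    induction w with
    | zero =>
      simp only [Nat.zero_add, Nat.mul_zero, pow_zero, one_mul]
      have e1 := R3 m
      have e2 : B j ((p : ℤ) ^ (2 * (m + 1)) * i)
          = (p : ℤ) ^ (m + 1) * B ((p : ℤ) ^ (2 * (m + 1)) * j) i := by simpa using hm1 0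
      have e3 : B j ((p : ℤ) ^ (2 * m) * i)
          = (p : ℤ) ^ m * B ((p : ℤ) ^ (2 * m) * j) i := by simpa using hm 0
      have e4 := hm 1
      rw [show 1 + m = m + 1 from by omega] at e4
      have e5 := R2 m
      linear_combination e1 + legendreSym p 12 * legendreSym p j * e2 + (p : ℤ) * e4
        - (p : ℤ) * e3 + (p : ℤ) ^ (m + 1) * e5
    | succ w ihw =>
      rw [show w + 1 + (m + 2) = w + m + 3 from by omega]
      have f1 := R1 w (w + m + 1)
      rw [show w + m + 1 + 2 = w + m + 3 from by omega,
          show w + m + 1 + 1 = w + m + 2 from by omega] at f1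
      have f2 := ihw
      rw [show w + (m + 2) = w + m + 2 from by omega] at f2
      have f3 := hm (w + 2)
      rw [show w + 2 + m = w + m + 2 from by omega] at f3
      have f4 := hm (w + 1)
      rw [show w + 1 + m = w + m + 1 from by omega] at f4
      have f5 := R1 (w + m + 1) w
      rw [show w + m + 1 + 1 = w + m + 2 from by omega,
          show w + m + 1 + 2 = w + m + 3 from by omega] at f5
      linear_combination f1 + f2 + (p : ℤ) * f3 - (p : ℤ) * f4 + (p : ℤ) ^ (m + 1) * f5
  have key2 : ∀ m : ℕ,
      (∀ w : ℕ, B ((p : ℤ) ^ (2 * w) * j) ((p : ℤ) ^ (2 * (w + m)) * i)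
        = (p : ℤ) ^ m * B ((p : ℤ) ^ (2 * (w + m)) * j) ((p : ℤ) ^ (2 * w) * i)) ∧
      (∀ w : ℕ, B ((p : ℤ) ^ (2 * w) * j) ((p : ℤ) ^ (2 * (w + (m + 1))) * i)
        = (p : ℤ) ^ (m + 1) * B ((p : ℤ) ^ (2 * (w + (m + 1))) * j) ((p : ℤ) ^ (2 * w) * i)) := by
    intro m
    induction m with
    | zero => exact ⟨case0, case1⟩
    | succ m ih => exact ⟨ih.2, step m ih.1 ih.2⟩
  rw [show 2 * v + 2 * s = 2 * (v + s) from by ring]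
  exact ⟨B ((p : ℤ) ^ (2 * (v + s)) * j) ((p : ℤ) ^ (2 * v) * i), (key2 s).1 v⟩
end

section
/- Set A := −B (that is, A(D,d) = −B(D,d) for all integers D, d), and define A_0 = A, A_1 = V A, and A_n = V(A_{n−1}) − p·A_{n−2} for n ≥ 2. Then for every n ≥ 0 and all integers D and d, A_n(D,d) = −B_n(D,d); that is, the duality between the Folsom–Ono weight 1/2 and weight 3/2 coefficient grids is preserved by all Hecke operators T_{12}(p^{2n}). -/
/-- Theorem 2.9: the Folsom–Ono duality `A(D,d) = −B(D,d)` is preserved by all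
Hecke operators `T₁₂(p^{2n})`: `A_n(D,d) = −B_n(D,d)` for all `n`. -/
theorem stmt_19 {p : ℕ} [Fact p.Prime] (hp : 5 ≤ p)
    (B A : ℤ → ℤ → ℤ) (hA : ∀ D d : ℤ, A D d = -B D d)
    (U : (ℤ → ℤ → ℤ) → ℤ → ℤ → ℤ)
    (hU : ∀ c : ℤ → ℤ → ℤ, ∀ D d : ℤ,
      U c D d = c D ((p : ℤ) ^ 2 * d)
        + legendreSym p 12 * legendreSym p (-d) * c D d
        + (p : ℤ) * (if (p : ℤ) ^ 2 ∣ d then c D (d / (p : ℤ) ^ 2) else 0))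
    (V : (ℤ → ℤ → ℤ) → ℤ → ℤ → ℤ)
    (hV : ∀ c : ℤ → ℤ → ℤ, ∀ D d : ℤ,
      V c D d = (p : ℤ) * c ((p : ℤ) ^ 2 * D) d
        + legendreSym p 12 * legendreSym p D * c D d
        + (if (p : ℤ) ^ 2 ∣ D then c (D / (p : ℤ) ^ 2) d else 0))
    (hUB : ∀ D d : ℤ,
      U B D d = (if (p : ℤ) ^ 2 ∣ D then B (D / (p : ℤ) ^ 2) d else 0)
        + legendreSym p 12 * legendreSym p D * B D d
        + (p : ℤ) * B ((p : ℤ) ^ 2 * D) d)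
    (Bn : ℕ → ℤ → ℤ → ℤ)
    (hB0 : Bn 0 = B) (hB1 : Bn 1 = U B)
    (hBrec : ∀ n : ℕ, ∀ D d : ℤ,
      Bn (n + 2) D d = U (Bn (n + 1)) D d - (p : ℤ) * Bn n D d)
    (An : ℕ → ℤ → ℤ → ℤ)
    (hA0 : An 0 = A) (hA1 : An 1 = V A)
    (hArec : ∀ n : ℕ, ∀ D d : ℤ,
      An (n + 2) D d = V (An (n + 1)) D d - (p : ℤ) * An n D d) :
    ∀ n : ℕ, ∀ D d : ℤ, An n D d = -Bn n D d := by

  have hUc : ∀ c c' : ℤ → ℤ → ℤ, (∀ D d : ℤ, c D d = c' D d) →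
      ∀ D d : ℤ, U c D d = U c' D d := by
    intro c c' h D d
    rw [hU, hU, h, h]
    split_ifs with h2
    · rw [h]
    · rfl
  have hVc : ∀ c c' : ℤ → ℤ → ℤ, (∀ D d : ℤ, c D d = c' D d) →
      ∀ D d : ℤ, V c D d = V c' D d := by
    intro c c' h D d
    rw [hV, hV, h, h]
    split_ifs with h2
    · rw [h]
    · rfl
  have hVneg : ∀ c : ℤ → ℤ → ℤ, ∀ D d : ℤ,
      V (fun D d => -c D d) D d = -(V c D d) := by
    intro c D d
    rw [hV, hV]
    split_ifs <;> ring
  have hVBU : ∀ D d : ℤ, V B D d = U B D d := by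
    intro D d
    rw [hV, hUB]
    ring
  have hcomm : ∀ c : ℤ → ℤ → ℤ, ∀ D d : ℤ, U (V c) D d = V (U c) D d := by
    intro c D d
    simp only [hU, hV]
    split_ifs <;> ring
  have hUlin : ∀ a b : ℤ → ℤ → ℤ, ∀ D d : ℤ,
      U (fun D d => a D d - (p : ℤ) * b D d) D d = U a D d - (p : ℤ) * U b D d := by
    intro a b D d
    simp only [hU]
    split_ifs <;> ring
  have hVlin : ∀ a b : ℤ → ℤ → ℤ, ∀ D d : ℤ,
      V (fun D d => a D d - (p : ℤ) * b D d) D d = V a D d - (p : ℤ) * V b D d := by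
    intro a b D d
    simp only [hV]
    split_ifs <;> ring
  have key : ∀ n : ℕ, (∀ D d : ℤ, An n D d = -Bn n D d) ∧
      (∀ D d : ℤ, V (Bn n) D d = U (Bn n) D d) := by
    intro n
    induction n using Nat.strong_induction_on with
    | _ n ih =>
      match n with
      | 0 =>
        refine ⟨fun D d => ?_, fun D d => ?_⟩
        · rw [hA0, hB0, hA]
        · rw [hB0]; exact hVBU D d
      | 1 =>
        refine ⟨fun D d => ?_, fun D d => ?_⟩
        · rw [hA1, hB1]
          rw [hVc A (fun D d => -B D d) hA D d, hVneg B D d]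
          rw [hVBU D d]
        · rw [hB1, (hcomm B D d).symm, hUc (V B) (U B) hVBU D d]
      | (m + 2) =>
        have ih1 := ih (m + 1) (by omega)
        have ih0 := ih m (by omega)
        refine ⟨fun D d => ?_, fun D d => ?_⟩
        · rw [hArec, hBrec]
          rw [hVc (An (m + 1)) (fun D d => -Bn (m + 1) D d) ih1.1 D d,
            hVneg (Bn (m + 1)) D d, ih1.2 D d, ih0.1 D d]
          ring
        · have hpt : ∀ D d : ℤ,
              Bn (m + 2) D d = U (Bn (m + 1)) D d - (p : ℤ) * Bn m D d := hBrec m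
          rw [hVc _ _ hpt D d, hVlin (U (Bn (m + 1))) (Bn m) D d,
            ← hcomm (Bn (m + 1)) D d,
            hUc (V (Bn (m + 1))) (U (Bn (m + 1))) ih1.2 D d, ih0.2 D d,
            ← hUlin (U (Bn (m + 1))) (Bn m) D d,
            hUc _ _ (fun D d => (hpt D d).symm) D d]
  intro n D d
  exact (key n).1 D d
end
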